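/- Let (T, B, τ) be a TIM decomposition of a temporal graph 𝒢, let uv be an edge of the underlying graph G, and let t ∈ {1, …, Λ}. If u and v lie in different bags at time t (i.e., the unique node labelled t whose bag contains u differs from the unique node labelled t whose bag contains v), then either t > max λ(uv) or t < min λ(uv). Equivalently, if min λ(uv) ≤ t ≤ max λ(uv), then u and v lie in the same bag at time t. -/

import Mathlib

variable {V : Type} [Fintype V] [DecidableEq V]

/-- The snapshot of a temporal graph `(G, lam)` at time `t`: the static graph on `V`
whose edges are the edges of `G` active at time `t`. -/
def snapshot (G : SimpleGraph V) (lam : Sym2 V → Finset ℕ) (t : ℕ) : SimpleGraph V where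
  Adj u v := G.Adj u v ∧ t ∈ lam s(u, v)
  symm := by
    constructor
    rintro u v ⟨h1, h2⟩
    exact ⟨h1.symm, by rwa [Sym2.eq_swap]⟩
  loopless := ⟨fun v h => G.ne_of_adj h.1 rfl⟩

/-- The undirected graph underlying the (uniquely determined) arc structure of a
candidate TIM decomposition: nodes `i` and `j` are adjacent iff their bags intersect
and their times are consecutive. -/
def timTree {ι : Type} (B : ι → Finset V) (τ : ι → ℕ) : SimpleGraph ι where
  Adj i j := (B i ∩ B j).Nonempty ∧ (τ j = τ i + 1 ∨ τ i = τ j + 1)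
  symm := by
    constructor
    rintro i j ⟨h1, h2⟩
    exact ⟨by rwa [Finset.inter_comm], h2.symm⟩
  loopless := by
    constructor
    rintro i ⟨-, h⟩
    rcases h with h | h <;> omega

/-- `(i, j)` is an arc of the TIM decomposition: the bags intersect and
`τ j = τ i + 1`. -/
def timArc {ι : Type} (B : ι → Finset V) (τ : ι → ℕ) (i j : ι) : Prop :=
  (B i ∩ B j).Nonempty ∧ τ j = τ i + 1

/-- `(ι, B, τ)` is a TIM decomposition of the temporal graph `(G, lam)` with lifetime `Λ`:
every time label lies in `{1, …, Λ}`; every vertex lies in exactly one bag with each time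
label; every time-edge is contained in a bag with the corresponding time label; and the
graph on the nodes whose (undirected) edges correspond to the arcs
`{(i, j) : B i ∩ B j ≠ ∅ ∧ τ j = τ i + 1}` is a tree. -/
def IsTIMDecomp (G : SimpleGraph V) (lam : Sym2 V → Finset ℕ) (Λ : ℕ)
    {ι : Type} (B : ι → Finset V) (τ : ι → ℕ) : Prop :=
  (∀ i, τ i ∈ Finset.Icc 1 Λ) ∧
  (∀ v : V, ∀ t ∈ Finset.Icc 1 Λ, ∃! i, τ i = t ∧ v ∈ B i) ∧
  (∀ e ∈ G.edgeSet, ∀ t ∈ lam e, ∃ i, τ i = t ∧ ∀ v ∈ e, v ∈ B i) ∧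
  (timTree B τ).IsTree

lemma exists_walk_range {ι : Type} (A : SimpleGraph ι) (f : ℕ → ι) (a : ℕ) :
    ∀ n : ℕ, (∀ k < n, A.Adj (f (a + k)) (f (a + k + 1))) →
      ∃ p : A.Walk (f a) (f (a + n)), p.support = (List.range' a (n + 1)).map f := by
  intro n
  induction n with
  | zero => intro _; exact ⟨SimpleGraph.Walk.nil, by simp [List.range']⟩
  | succ n ih =>
    intro h
    obtain ⟨p, hp⟩ := ih (fun k hk => h k (by omega))
    refine ⟨(p.concat (h n (by omega))).copy rfl (by ring_nf), ?_⟩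
    rw [SimpleGraph.Walk.support_copy, SimpleGraph.Walk.support_concat, hp,
      List.range'_concat, List.map_append]
    simp [List.range'_concat, List.append_assoc]
    exact congrArg f (by omega)

/-- In a TIM decomposition, let `uv` be an edge of the underlying graph,
`t ∈ {1, …, Λ}`, and let `i` (resp. `j`) be a node labelled `t` whose bag contains `u`
(resp. `v`). If `u` and `v` lie in different bags at time `t` (`i ≠ j`), then
`t > max λ(uv)` or `t < min λ(uv)`; equivalently, if `min λ(uv) ≤ t ≤ max λ(uv)` then
`u` and `v` lie in the same bag at time `t` (`i = j`). -/
theorem stmt_5 (G : SimpleGraph V) (lam : Sym2 V → Finset ℕ) (Λ : ℕ)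
    {ι : Type} (B : ι → Finset V) (τ : ι → ℕ)
    (hne : ∀ e ∈ G.edgeSet, (lam e).Nonempty)
    (hempty : ∀ e, e ∉ G.edgeSet → lam e = ∅)
    (hbdd : ∀ e, ∀ t ∈ lam e, 1 ≤ t ∧ t ≤ Λ)
    (hlife : ∃ e ∈ G.edgeSet, Λ ∈ lam e)
    (hdec : IsTIMDecomp G lam Λ B τ)
    (u v : V) (huv : G.Adj u v) (hlamne : (lam s(u, v)).Nonempty)
    (t : ℕ) (ht : t ∈ Finset.Icc 1 Λ)
    (i j : ι) (hi : τ i = t) (hj : τ j = t)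
    (hu : u ∈ B i) (hv : v ∈ B j) :
    (i ≠ j → (lam s(u, v)).max' hlamne < t ∨ t < (lam s(u, v)).min' hlamne) ∧
    ((lam s(u, v)).min' hlamne ≤ t → t ≤ (lam s(u, v)).max' hlamne → i = j) := by
  obtain ⟨hIcc, hex, hcov, htree⟩ := hdec
  set t1 := (lam s(u, v)).min' hlamne with ht1def
  set t2 := (lam s(u, v)).max' hlamne with ht2def
  have main : t1 ≤ t → t ≤ t2 → i = j := by
    intro h1 h2
    have ht1mem : t1 ∈ lam s(u, v) := Finset.min'_mem _ _
    have ht2mem : t2 ∈ lam s(u, v) := Finset.max'_mem _ _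
    have hb1 := hbdd _ _ ht1mem
    have hb2 := hbdd _ _ ht2mem
    have ht1Icc : t1 ∈ Finset.Icc 1 Λ := Finset.mem_Icc.2 hb1
    have ht2Icc : t2 ∈ Finset.Icc 1 Λ := Finset.mem_Icc.2 hb2
    have hsub : ∀ s, t1 ≤ s → s ≤ t2 → s ∈ Finset.Icc 1 Λ := by
      intro s hs1 hs2; exact Finset.mem_Icc.2 ⟨by omega, by omega⟩
    obtain ⟨i0⟩ := htree.isConnected.nonempty
    obtain ⟨fu, hfu⟩ : ∃ f : ℕ → ι, ∀ s ∈ Finset.Icc 1 Λ, τ (f s) = s ∧ u ∈ B (f s) := by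
      refine ⟨fun s => if h : s ∈ Finset.Icc 1 Λ then ((hex u s h).exists).choose else i0, ?_⟩
      intro s hs
      simp only [dif_pos hs]
      exact ((hex u s hs).exists).choose_spec
    obtain ⟨fv, hfv⟩ : ∃ f : ℕ → ι, ∀ s ∈ Finset.Icc 1 Λ, τ (f s) = s ∧ v ∈ B (f s) := by
      refine ⟨fun s => if h : s ∈ Finset.Icc 1 Λ then ((hex v s h).exists).choose else i0, ?_⟩
      intro s hs
      simp only [dif_pos hs]
      exact ((hex v s hs).exists).choose_spec
    have hadju : ∀ k < t2 - t1, (timTree B τ).Adj (fu (t1 + k)) (fu (t1 + k + 1)) := by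
      intro k hk
      have ha := hfu (t1 + k) (hsub _ (by omega) (by omega))
      have hb := hfu (t1 + k + 1) (hsub _ (by omega) (by omega))
      exact ⟨⟨u, Finset.mem_inter.2 ⟨ha.2, hb.2⟩⟩, Or.inl (by omega)⟩
    have hadjv : ∀ k < t2 - t1, (timTree B τ).Adj (fv (t1 + k)) (fv (t1 + k + 1)) := by
      intro k hk
      have ha := hfv (t1 + k) (hsub _ (by omega) (by omega))
      have hb := hfv (t1 + k + 1) (hsub _ (by omega) (by omega))
      exact ⟨⟨v, Finset.mem_inter.2 ⟨ha.2, hb.2⟩⟩, Or.inl (by omega)⟩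
    obtain ⟨pu, hpu⟩ := exists_walk_range (timTree B τ) fu t1 (t2 - t1) hadju
    obtain ⟨pv, hpv⟩ := exists_walk_range (timTree B τ) fv t1 (t2 - t1) hadjv
    -- cover nodes at t1 and t2
    obtain ⟨a, ha1, ha2⟩ := hcov s(u, v) ((G.mem_edgeSet).2 huv) t1 ht1mem
    obtain ⟨b, hb1, hb2⟩ := hcov s(u, v) ((G.mem_edgeSet).2 huv) t2 ht2mem
    have hEq1 : fu t1 = fv t1 := by
      have hxu := (hex u t1 ht1Icc).unique ⟨(hfu t1 ht1Icc).1, (hfu t1 ht1Icc).2⟩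
        ⟨ha1, ha2 u (by simp)⟩
      have hxv := (hex v t1 ht1Icc).unique ⟨(hfv t1 ht1Icc).1, (hfv t1 ht1Icc).2⟩
        ⟨ha1, ha2 v (by simp)⟩
      rw [hxu, hxv]
    have hs2Icc : t1 + (t2 - t1) ∈ Finset.Icc 1 Λ := hsub _ (by omega) (by omega)
    have hEq2 : fu (t1 + (t2 - t1)) = fv (t1 + (t2 - t1)) := by
      have e1 : t1 + (t2 - t1) = t2 := by omega
      have hxu := (hex u t2 ht2Icc).unique
        ⟨by rw [(hfu _ hs2Icc).1]; omega, (hfu _ hs2Icc).2⟩ ⟨hb1, hb2 u (by simp)⟩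
      have hxv := (hex v t2 ht2Icc).unique
        ⟨by rw [(hfv _ hs2Icc).1]; omega, (hfv _ hs2Icc).2⟩ ⟨hb1, hb2 v (by simp)⟩
      rw [hxu, hxv]
    have hnodupu : pu.IsPath := by
      rw [SimpleGraph.Walk.isPath_def, hpu]
      refine List.Nodup.map_on ?_ (List.nodup_range' _)
      intro x hx y hy hxy
      rw [List.mem_range'_1] at hx hy
      have e1 := (hfu x (hsub x (by omega) (by omega))).1
      have e2 := (hfu y (hsub y (by omega) (by omega))).1
      rw [← e1, ← e2, hxy]
    have hnodupv : (pv.copy hEq1.symm hEq2.symm).IsPath := by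
      rw [SimpleGraph.Walk.isPath_def, SimpleGraph.Walk.support_copy, hpv]
      refine List.Nodup.map_on ?_ (List.nodup_range' _)
      intro x hx y hy hxy
      rw [List.mem_range'_1] at hx hy
      have e1 := (hfv x (hsub x (by omega) (by omega))).1
      have e2 := (hfv y (hsub y (by omega) (by omega))).1
      rw [← e1, ← e2, hxy]
    obtain ⟨q, hq, huq⟩ := htree.existsUnique_path (fu t1) (fu (t1 + (t2 - t1)))
    have hpeq : pu = pv.copy hEq1.symm hEq2.symm :=
      (huq pu hnodupu).trans (huq _ hnodupv).symm
    have hsupp : (List.range' t1 (t2 - t1 + 1)).map fu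
        = (List.range' t1 (t2 - t1 + 1)).map fv := by
      rw [← hpu, ← hpv, hpeq, SimpleGraph.Walk.support_copy]
    have htmem : t ∈ List.range' t1 (t2 - t1 + 1) := List.mem_range'_1.2 ⟨h1, by omega⟩
    have hmem2 : fu t ∈ (List.range' t1 (t2 - t1 + 1)).map fv := by
      rw [← hsupp]; exact List.mem_map_of_mem htmem
    obtain ⟨s, hs, hfvs⟩ := List.mem_map.1 hmem2
    rw [List.mem_range'_1] at hs
    have hsIcc := hsub s (by omega) (by omega)
    have hst : s = t := by
      have e1 := (hfv s hsIcc).1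
      have e2 := (hfu t (hsub t h1 h2)).1
      rw [hfvs] at e1
      omega
    have hfuv : fu t = fv t := by rw [← hfvs, hst]
    have hiu : i = fu t :=
      (hex u t ht).unique ⟨hi, hu⟩ ⟨(hfu t (hsub t h1 h2)).1, (hfu t (hsub t h1 h2)).2⟩
    have hjv : j = fv t :=
      (hex v t ht).unique ⟨hj, hv⟩ ⟨(hfv t (hsub t h1 h2)).1, (hfv t (hsub t h1 h2)).2⟩
    rw [hiu, hjv, hfuv]
  refine ⟨?_, main⟩
  intro hij
  by_contra hcon
  push_neg at hcon
  exact hij (main hcon.2 hcon.1)
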